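/- Let β ∈ (0,1] and T a positive integer, and define f : {0,1}^m → ℝ by f(z) = (1 − β·|z|/m)^T, where |z| is the Hamming weight. Then every Fourier coefficient of f is non-negative: f^(S) ≥ 0 for all S ∈ {0,1}^m. -/

import Mathlib

open Finset

/-- The character `χ_S(z) = (-1)^(S·z)` on the Boolean cube (`F₂` inner product). -/
noncomputable def boolChar {m : ℕ} (S z : Fin m → ZMod 2) : ℝ :=
  (-1 : ℝ) ^ (∑ i, S i * z i).val

/-- The Fourier coefficient `f^(S) = 2^{-m} Σ_z f(z) (-1)^(S·z)`. -/
noncomputable def bFourierCoeff {m : ℕ} (f : (Fin m → ZMod 2) → ℝ) (S : Fin m → ZMod 2) : ℝ :=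
  (∑ z : Fin m → ZMod 2, f z * boolChar S z) / 2 ^ m

/-!
With `h 0 = 1/m` and `h 1 = (1 - β)/m` one has `f z = (∑ i, h (z i))^T`. Expanding the power writes
`f` as a sum, over maps `g : Fin T → Fin m`, of product functions `z ↦ ∏ i, h (z i) ^ kᵢ`. The Fourier
coefficient of a product of one-coordinate functions `ψᵢ` factors into the one-dimensional
coefficients `(ψᵢ 0 ± ψᵢ 1)/2`, which are nonnegative because `0 ≤ ψᵢ 1 ≤ ψᵢ 0`, i.e. because
`0 ≤ 1 - β ≤ 1`.
-/

theorem neg_one_pow_val_sum {ι : Type*} (s : Finset ι) (v : ι → ZMod 2) :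
    (-1 : ℝ) ^ (∑ i ∈ s, v i).val = ∏ i ∈ s, (-1 : ℝ) ^ (v i).val := by
  have hcast : ∑ i ∈ s, v i = ((∑ i ∈ s, (v i).val : ℕ) : ZMod 2) := by
    push_cast [ZMod.natCast_val, ZMod.cast_id]
    rfl
  rw [hcast, ZMod.val_natCast, ← neg_one_pow_eq_pow_mod_two, prod_pow_eq_pow_sum]

theorem boolChar_eq_prod {m : ℕ} (S z : Fin m → ZMod 2) :
    boolChar S z = ∏ i, (-1 : ℝ) ^ (S i * z i).val :=
  neg_one_pow_val_sum _ _

theorem bFourierCoeff_sum {m : ℕ} {ι : Type*} (s : Finset ι) (F : ι → (Fin m → ZMod 2) → ℝ)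
    (S : Fin m → ZMod 2) :
    bFourierCoeff (fun z => ∑ g ∈ s, F g z) S = ∑ g ∈ s, bFourierCoeff (F g) S := by
  simp only [bFourierCoeff, sum_mul, ← sum_div]
  rw [sum_comm]

theorem bFourierCoeff_prod {m : ℕ} (φ : Fin m → ZMod 2 → ℝ) (S : Fin m → ZMod 2) :
    bFourierCoeff (fun z => ∏ i, φ i (z i)) S =
      ∏ i, (∑ b, φ i b * (-1 : ℝ) ^ (S i * b).val) / 2 := by
  rw [prod_div_distrib, prod_const, card_univ, Fintype.card_fin, Fintype.prod_sum, bFourierCoeff]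
  simp only [boolChar_eq_prod, ← prod_mul_distrib]

theorem sum_mul_neg_one_pow_nonneg {ψ : ZMod 2 → ℝ} (h1 : 0 ≤ ψ 1) (h10 : ψ 1 ≤ ψ 0)
    (s : ZMod 2) : 0 ≤ ∑ b, ψ b * (-1 : ℝ) ^ (s * b).val := by
  have huniv : (univ : Finset (ZMod 2)) = {0, 1} := rfl
  rw [huniv, sum_pair zero_ne_one]
  obtain rfl | rfl : s = 0 ∨ s = 1 := by decide +revert
  · simp only [zero_mul, ZMod.val_zero, pow_zero, mul_one]
    linarith
  · simp only [one_mul, ZMod.val_zero, ZMod.val_one, pow_zero, pow_one, mul_one, mul_neg]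
    linarith

theorem Fintype.sum_pow_eq_sum_prod_pow_card {ι R : Type*} [Fintype ι] [DecidableEq ι]
    [CommSemiring R] (a : ι → R) (T : ℕ) :
    (∑ i, a i) ^ T = ∑ g : Fin T → ι, ∏ i, a i ^ #{t | g t = i} := by
  rw [Fintype.sum_pow]
  refine Finset.sum_congr rfl fun g _ => ?_
  rw [← Finset.prod_fiberwise' univ g a]
  exact Finset.prod_congr rfl fun i _ => prod_const _

theorem bFourierCoeff_pow_sum_nonneg {m : ℕ} (h : Fin m → ZMod 2 → ℝ) (h1 : ∀ i, 0 ≤ h i 1)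
    (h10 : ∀ i, h i 1 ≤ h i 0) (T : ℕ) (S : Fin m → ZMod 2) :
    0 ≤ bFourierCoeff (fun z => (∑ i, h i (z i)) ^ T) S := by
  simp only [Fintype.sum_pow_eq_sum_prod_pow_card, bFourierCoeff_sum]
  refine sum_nonneg fun g _ => ?_
  rw [bFourierCoeff_prod (fun i b => h i b ^ #{t | g t = i})]
  refine prod_nonneg fun i _ => div_nonneg ?_ zero_le_two
  exact sum_mul_neg_one_pow_nonneg (pow_nonneg (h1 i) _)
    (pow_le_pow_left₀ (h1 i) (h10 i) _) (S i)

theorem sum_ite_eq_zero_eq_sub_hammingNorm {ι R : Type*} [Fintype ι] [CommRing R]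
    {γ : Type*} [DecidableEq γ] [Zero γ] (z : ι → γ) (a b : R) :
    ∑ i, (if z i = 0 then a else b) = Fintype.card ι * a - hammingNorm z * (a - b) := by
  have : ∀ i, (if z i = 0 then a else b) = a - (if z i ≠ 0 then a - b else 0) := by
    intro i; split_ifs <;> simp_all
  simp only [this, sum_sub_distrib, sum_const, card_univ, nsmul_eq_mul, ← sum_filter, hammingNorm]
  ring

theorem fourierCoeff_nonneg_of_hammingWeight_pow_general {m : ℕ} (hm : 0 < m) (β : ℝ)
    (hβ0 : 0 < β) (hβ1 : β ≤ 1) (T : ℕ)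
    (f : (Fin m → ZMod 2) → ℝ)
    (hf : ∀ z, f z = (1 - β * (hammingNorm z : ℝ) / (m : ℝ)) ^ T)
    (S : Fin m → ZMod 2) :
    0 ≤ bFourierCoeff f S := by
  have hm' : (0 : ℝ) < m := by exact_mod_cast hm
  let h : Fin m → ZMod 2 → ℝ := fun _ b => if b = 0 then 1 / m else (1 - β) / m
  have hf_eq : f = fun z => (∑ i, h i (z i)) ^ T := by
    funext z
    rw [hf z, sum_ite_eq_zero_eq_sub_hammingNorm, Fintype.card_fin]
    field_simp
    ring
  rw [hf_eq]
  refine bFourierCoeff_pow_sum_nonneg h (fun _ => ?_) (fun _ => ?_) T S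
  · simp only [h, one_ne_zero, if_false]
    exact div_nonneg (by linarith) hm'.le
  · simp only [h, one_ne_zero, if_false, if_true]
    gcongr
    linarith

/-- For `β ∈ (0,1]`, `T` a positive integer and `f(z) = (1 - β|z|/m)^T` (with `|z|` the
Hamming weight), every Fourier coefficient of `f` is non-negative. -/
theorem fourierCoeff_nonneg_of_hammingWeight_pow {m : ℕ} (hm : 0 < m) (β : ℝ)
    (hβ0 : 0 < β) (hβ1 : β ≤ 1) (T : ℕ) (hT : 0 < T)
    (f : (Fin m → ZMod 2) → ℝ)
    (hf : ∀ z, f z = (1 - β * (hammingNorm z : ℝ) / (m : ℝ)) ^ T)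
    (S : Fin m → ZMod 2) :
    0 ≤ bFourierCoeff f S :=
  fourierCoeff_nonneg_of_hammingWeight_pow_general hm β hβ0 hβ1 T f hf S
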